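/- arXiv:2109.14036 — 14 statements merged into one kernel-verified Lean document; each statement's English description precedes it below -/
import Mathlib

section
/- Let p ≥ 1 be a natural number. Suppose x, y : ℝ → ℝ are differentiable functions satisfying the coupled initial value problem x'(t) = -(y(t))^(p-1) and y'(t) = (x(t))^(p-1) for all real t, with x(0) = 1 and y(0) = 0. Then for all real t, (x(t))^p + (y(t))^p = 1 (the p-Pythagorean equation). -/
theorem hasDerivAt_pow_add_pow_of_coupled {x y : ℝ → ℝ} {t : ℝ} (p : ℕ)
    (hx : HasDerivAt x (-(y t) ^ (p - 1)) t) (hy : HasDerivAt y ((x t) ^ (p - 1)) t) :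
    HasDerivAt (fun s => (x s) ^ p + (y s) ^ p) 0 t :=
  ((hx.pow p).add (hy.pow p)).congr_deriv (by ring)

/-- The p-Pythagorean equation: solutions of the generalized coupled initial value
problem `x' = -y^(p-1)`, `y' = x^(p-1)`, `x 0 = 1`, `y 0 = 0` satisfy
`x(t)^p + y(t)^p = 1` for all `t`. -/
theorem p_pythagorean (p : ℕ) (hp : 1 ≤ p) (x y : ℝ → ℝ)
    (hx : Differentiable ℝ x) (hy : Differentiable ℝ y)
    (hx' : ∀ t, deriv x t = -(y t) ^ (p - 1))
    (hy' : ∀ t, deriv y t = (x t) ^ (p - 1))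
    (hx0 : x 0 = 1) (hy0 : y 0 = 0) :
    ∀ t : ℝ, (x t) ^ p + (y t) ^ p = 1 := by
  have hE : ∀ t, HasDerivAt (fun s => (x s) ^ p + (y s) ^ p) 0 t := fun t =>
    hasDerivAt_pow_add_pow_of_coupled p (hx' t ▸ (hx t).hasDerivAt) (hy' t ▸ (hy t).hasDerivAt)
  intro t
  calc (x t) ^ p + (y t) ^ p = (x 0) ^ p + (y 0) ^ p :=
        is_const_of_deriv_eq_zero (fun s => (hE s).differentiableAt) (fun s => (hE s).deriv) t 0
    _ = 1 := by rw [hx0, hy0, one_pow, zero_pow (by omega), add_zero]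
end

section
/- Let p ≥ 1 be a real number. For every x in the closed interval [0,1], the function a(x) := (1/2)·x·(1 - x^p)^(1/p) + ∫_x^1 (1 - t^p)^(1/p) dt (the area of the p-circle sector from (1,0) to the point (x, (1-x^p)^(1/p))) satisfies a(x) = (1/2) ∫_x^1 (1 - t^p)^(1/p - 1) dt. -/
/-!
Write `f t = (1 - t ^ p) ^ (1 / p)`. Integrating by parts against `t`,
`∫_x^1 f = ∫_x^1 t (-f' t) dt - x f x`, and pointwise `t (-f' t) + f t = (1 - t ^ p) ^ (1 / p - 1)`.
Hence `∫_x^1 (1 - t ^ p) ^ (1 / p - 1) = 2 ∫_x^1 f + x f x`, which is twice the sector area.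
The integrand `-f'` is singular at `t = 1` when `p > 1`; it is integrable as the nonnegative
derivative of the continuous function `-f`.
-/

open Real intervalIntegral

variable {p : ℝ}

theorem continuous_one_sub_rpow_rpow_one_div (hp : 0 < p) :
    Continuous fun t : ℝ => (1 - t ^ p) ^ (1 / p) :=
  (continuous_rpow_const (one_div_pos.2 hp).le).comp
    (continuous_const.sub (continuous_rpow_const hp.le))

theorem hasDerivAt_one_sub_rpow_rpow_one_div (hp : 0 < p) {t : ℝ} (ht : t ∈ Set.Ioo 0 1) :
    HasDerivAt (fun t : ℝ => (1 - t ^ p) ^ (1 / p))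
      (-(t ^ (p - 1) * (1 - t ^ p) ^ (1 / p - 1))) t := by
  have htp : t ^ p < 1 := rpow_lt_one ht.1.le ht.2 hp
  convert ((hasDerivAt_rpow_const (p := p) (Or.inl ht.1.ne')).const_sub 1).rpow_const
    (p := 1 / p) (Or.inl (sub_pos.2 htp).ne') using 1
  field_simp

theorem Ioo_min_max_one_subset {x : ℝ} (hx : 0 ≤ x) (hx1 : x ≤ 1) :
    Set.Ioo (min x 1) (max x 1) ⊆ Set.Ioo 0 1 := by
  rw [min_eq_left hx1, max_eq_right hx1]
  exact Set.Ioo_subset_Ioo_left hx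

theorem intervalIntegrable_rpow_sub_one_mul_one_sub_rpow_rpow (hp : 0 < p) {x : ℝ}
    (hx : 0 ≤ x) (hx1 : x ≤ 1) :
    IntervalIntegrable (fun t : ℝ => t ^ (p - 1) * (1 - t ^ p) ^ (1 / p - 1)) MeasureTheory.volume
      x 1 := by
  refine intervalIntegrable_deriv_of_nonneg (g := fun t => -(1 - t ^ p) ^ (1 / p))
    (continuous_one_sub_rpow_rpow_one_div hp).neg.continuousOn
    (fun t ht => ?_) (fun t ht => ?_)
  · simpa using (hasDerivAt_one_sub_rpow_rpow_one_div hp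
      (Ioo_min_max_one_subset hx hx1 ht)).fun_neg
  · obtain ⟨ht0, ht1⟩ := Ioo_min_max_one_subset hx hx1 ht
    have : 0 ≤ 1 - t ^ p := sub_nonneg.2 (rpow_le_one ht0.le ht1.le hp.le)
    positivity

theorem integral_one_sub_rpow_rpow_one_div_eq (hp : 0 < p) {x : ℝ} (hx : 0 ≤ x) (hx1 : x ≤ 1) :
    ∫ t in x..1, (1 - t ^ p) ^ (1 / p)
      = (∫ t in x..1, t * (t ^ (p - 1) * (1 - t ^ p) ^ (1 / p - 1)))
        - x * (1 - x ^ p) ^ (1 / p) := by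
  have hparts := integral_mul_deriv_eq_deriv_mul_of_hasDerivAt (a := x) (b := 1)
    (u := fun t => t) (u' := fun _ => 1) (v := fun t => (1 - t ^ p) ^ (1 / p))
    (v' := fun t => -(t ^ (p - 1) * (1 - t ^ p) ^ (1 / p - 1)))
    continuous_id.continuousOn (continuous_one_sub_rpow_rpow_one_div hp).continuousOn
    (fun t _ => hasDerivAt_id t)
    (fun t ht => hasDerivAt_one_sub_rpow_rpow_one_div hp (Ioo_min_max_one_subset hx hx1 ht))
    intervalIntegrable_const (intervalIntegrable_rpow_sub_one_mul_one_sub_rpow_rpow hp hx hx1).neg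
  simp only [mul_neg, intervalIntegral.integral_neg, one_mul, one_rpow, sub_self,
    zero_rpow (one_div_pos.2 hp).ne', mul_zero, zero_sub] at hparts
  linarith

theorem mul_rpow_sub_one_mul_one_sub_rpow_rpow_add (hp : p ≠ 0) {t : ℝ} (ht : 0 ≤ t)
    (ht1 : t ^ p ≤ 1) :
    t * (t ^ (p - 1) * (1 - t ^ p) ^ (1 / p - 1)) + (1 - t ^ p) ^ (1 / p)
      = (1 - t ^ p) ^ (1 / p - 1) := by
  have htp : t * t ^ (p - 1) = t ^ p := by
    rw [← rpow_one_add' ht (by simpa using hp)]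
    ring_nf
  have hsp : (1 - t ^ p) ^ (1 / p) = (1 - t ^ p) ^ (1 / p - 1) * (1 - t ^ p) := by
    rw [← rpow_add_one' (sub_nonneg.2 ht1) (by simpa using hp)]
    ring_nf
  rw [← mul_assoc, htp, hsp]
  ring

/-- The area of the p-circle sector from `(1,0)` to `(x, (1-x^p)^(1/p))`,
namely `a(x) = (1/2) x (1-x^p)^(1/p) + ∫_x^1 (1-t^p)^(1/p) dt`, equals
`(1/2) ∫_x^1 (1-t^p)^(1/p - 1) dt`. -/
theorem sector_area_eq (p : ℝ) (hp : 1 ≤ p) :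
    ∀ x ∈ Set.Icc (0 : ℝ) 1,
      (1 / 2) * x * (1 - x ^ p) ^ (1 / p) + (∫ t in x..1, (1 - t ^ p) ^ (1 / p))
        = (1 / 2) * ∫ t in x..1, (1 - t ^ p) ^ (1 / p - 1) := by
  rintro x ⟨hx0, hx1⟩
  have hp0 : 0 < p := one_pos.trans_le hp
  have hparts := integral_one_sub_rpow_rpow_one_div_eq hp0 hx0 hx1
  have hsplit : ∫ t in x..1, (1 - t ^ p) ^ (1 / p - 1)
      = (∫ t in x..1, t * (t ^ (p - 1) * (1 - t ^ p) ^ (1 / p - 1)))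
        + ∫ t in x..1, (1 - t ^ p) ^ (1 / p) := by
    rw [← integral_add
      ((intervalIntegrable_rpow_sub_one_mul_one_sub_rpow_rpow hp0 hx0 hx1).continuousOn_mul
        (continuousOn_id' _))
      ((continuous_one_sub_rpow_rpow_one_div hp0).intervalIntegrable x 1)]
    refine integral_congr fun t ht => ?_
    rw [Set.uIcc_of_le hx1] at ht
    have ht0 : 0 ≤ t := hx0.trans ht.1
    exact (mul_rpow_sub_one_mul_one_sub_rpow_rpow_add hp0.ne' ht0
      (rpow_le_one ht0 ht.2 hp0.le)).symm
  rw [hsplit]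
  linarith
end

section
/- Let p ≥ 1 be a real number. For every x in the open interval (0,1), the function a(x) := (1/2)·x·(1 - x^p)^(1/p) + ∫_x^1 (1 - t^p)^(1/p) dt has derivative at x equal to -(1 - x^p)^(1/p - 1)/2. -/
open Real intervalIntegral

/-! For any continuous `f`, the sector area `x f(x)/2 + ∫_x^b f` has derivative
`(x f'(x) - f(x))/2`. For `f(x) = (1 - x^p)^(1/p)` we have `x f'(x) = -x^p (1 - x^p)^(1/p - 1)`
and `f(x) = (1 - x^p) (1 - x^p)^(1/p - 1)`, so the two terms add up to `-(1 - x^p)^(1/p - 1)`. -/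

theorem hasDerivAt_half_mul_add_integral {f : ℝ → ℝ} {f' x : ℝ} (b : ℝ) (hf : Continuous f)
    (hfx : HasDerivAt f f' x) :
    HasDerivAt (fun x => 1 / 2 * x * f x + ∫ t in x..b, f t) ((x * f' - f x) / 2) x := by
  have hlin : HasDerivAt (fun y : ℝ => 1 / 2 * y) (1 / 2) x := by
    simpa using (hasDerivAt_id x).const_mul (1 / 2 : ℝ)
  have hint : HasDerivAt (fun u => ∫ t in u..b, f t) (-f x) x :=
    integral_hasDerivAt_left (hf.intervalIntegrable x b) (hf.stronglyMeasurableAtFilter _ _)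
      hf.continuousAt
  exact ((hlin.mul hfx).add hint).congr_deriv (by ring)

theorem continuous_one_sub_rpow_rpow {p q : ℝ} (hp : 0 ≤ p) (hq : 0 ≤ q) :
    Continuous fun t : ℝ => (1 - t ^ p) ^ q :=
  (continuous_const.sub (continuous_rpow_const hp)).rpow_const fun _ => Or.inr hq

theorem hasDerivAt_one_sub_rpow_rpow_inv {p x : ℝ} (hp : p ≠ 0) (hx : x ≠ 0)
    (hxp : 1 - x ^ p ≠ 0) :
    HasDerivAt (fun t : ℝ => (1 - t ^ p) ^ (1 / p))
      (-((1 - x ^ p) ^ (1 / p - 1) * x ^ (p - 1))) x := by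
  have hinner : HasDerivAt (fun t : ℝ => 1 - t ^ p) (-(p * x ^ (p - 1))) x := by
    simpa using (hasDerivAt_rpow_const (Or.inl hx)).const_sub (1 : ℝ)
  exact ((hasDerivAt_rpow_const (p := 1 / p) (Or.inl hxp)).comp x hinner).congr_deriv
    (by rw [mul_neg, mul_mul_mul_comm, one_div_mul_cancel hp, one_mul])

/-- The sector-area function `a(x) = (1/2) x (1-x^p)^(1/p) + ∫_x^1 (1-t^p)^(1/p) dt`
has derivative `-(1-x^p)^(1/p - 1)/2` at every `x ∈ (0,1)`. -/
theorem sector_area_deriv (p : ℝ) (hp : 1 ≤ p) :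
    ∀ x ∈ Set.Ioo (0 : ℝ) 1,
      HasDerivAt
        (fun x : ℝ => (1 / 2) * x * (1 - x ^ p) ^ (1 / p)
          + ∫ t in x..1, (1 - t ^ p) ^ (1 / p))
        (-(1 - x ^ p) ^ (1 / p - 1) / 2) x := by
  rintro x ⟨hx0, hx1⟩
  have hp0 : 0 < p := by linarith
  have hxp : 0 < 1 - x ^ p := sub_pos.2 (rpow_lt_one hx0.le hx1 hp0)
  refine (hasDerivAt_half_mul_add_integral 1
    (continuous_one_sub_rpow_rpow hp0.le (by positivity))
    (hasDerivAt_one_sub_rpow_rpow_inv hp0.ne' hx0.ne' hxp.ne')).congr_deriv ?_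
  have hxpow : x * x ^ (p - 1) = x ^ p := by
    rw [← rpow_one_add' hx0.le (by linarith), add_sub_cancel]
  have hpow : (1 - x ^ p) ^ (1 / p) = (1 - x ^ p) ^ (1 / p - 1) * (1 - x ^ p) := by
    rw [← rpow_add_one hxp.ne', sub_add_cancel]
  rw [hpow, mul_neg, ← mul_assoc, mul_comm x, mul_assoc, hxpow]
  ring
end

section
/- Let k ≥ 3 be a natural number. There do not exist continuous functions s, c : ℝ → ℝ such that: (i) |s(t)|^k + |c(t)|^k = 1 for all real t; (ii) s(0) = 0 and c(0) = 1; (iii) there exists T > 0 with s(T) = 1; and (iv) s(2t) = 2·s(t)·c(t) for all real t. (In particular, the double angle formula sin_k(2t) = 2 sin_k(t) cos_k(t) fails for every integer k ≥ 3.) -/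
/-- For every integer `k ≥ 3`, there are no continuous functions `s, c : ℝ → ℝ`
satisfying the `k`-Pythagorean identity `|s t|^k + |c t|^k = 1`, the initial values
`s 0 = 0`, `c 0 = 1`, attaining `s T = 1` for some `T > 0`, and the classical
double angle formula `s (2t) = 2 s t c t`. -/
theorem no_double_angle (k : ℕ) (hk : 3 ≤ k) :
    ¬ ∃ s c : ℝ → ℝ,
        Continuous s ∧ Continuous c ∧
        (∀ t : ℝ, |s t| ^ k + |c t| ^ k = 1) ∧
        s 0 = 0 ∧ c 0 = 1 ∧
        (∃ T : ℝ, 0 < T ∧ s T = 1) ∧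
        (∀ t : ℝ, s (2 * t) = 2 * s t * c t) := by
  rintro ⟨s, c, hs, hc, hpyth, hs0, hc0, ⟨T, hT, hsT⟩, hdouble⟩
  have hk0 : (k : ℝ) ≠ 0 := by positivity
  have hkpos : (0:ℝ) < k := by positivity
  set a : ℝ := (1/2 : ℝ) ^ ((1:ℝ)/k) with ha
  have ha_pos : 0 < a := Real.rpow_pos_of_pos (by norm_num) _
  have hak : a ^ k = 1/2 := by
    rw [ha, ← Real.rpow_natCast ((1/2:ℝ) ^ ((1:ℝ)/k)) k, ← Real.rpow_mul (by norm_num)]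
    rw [show (1:ℝ)/k * k = 1 by field_simp]
    norm_num
  have ha1 : a < 1 := by
    apply Real.rpow_lt_one (by norm_num) (by norm_num) (by positivity)
  obtain ⟨t0, ht0, hst0⟩ : ∃ t0 ∈ Set.Icc 0 T, s t0 = a := by
    apply intermediate_value_Icc hT.le hs.continuousOn
    rw [hs0, hsT]; exact ⟨ha_pos.le, ha1.le⟩
  have habs : |s t0| = a := by rw [hst0, abs_of_pos ha_pos]
  have hck : |c t0| ^ k = 1/2 := by
    have h := hpyth t0; rw [habs, hak] at h; linarith
  have hcabs : |c t0| = a := by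
    have : |c t0| ^ k = a ^ k := by rw [hck, hak]
    exact (pow_left_inj₀ (abs_nonneg _) ha_pos.le (by omega)).mp this
  have hs2 : |s (2 * t0)| = 2 * a ^ 2 := by
    rw [hdouble t0, abs_mul, abs_mul, habs, hcabs]
    norm_num; ring
  have hle1 : |s (2 * t0)| ≤ 1 := by
    have h := hpyth (2 * t0)
    have h2 : |s (2 * t0)| ^ k ≤ 1 := by
      nlinarith [pow_nonneg (abs_nonneg (c (2*t0))) k]
    exact (pow_le_one_iff_of_nonneg (abs_nonneg _) (by omega)).mp h2
  have ha2 : a ^ 2 = (1/2 : ℝ) ^ ((2:ℝ)/k) := by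
    rw [ha, ← Real.rpow_natCast ((1/2:ℝ) ^ ((1:ℝ)/k)) 2, ← Real.rpow_mul (by norm_num)]
    congr 1
    ring
  have hgt : (1/2 : ℝ) < (1/2 : ℝ) ^ ((2:ℝ)/k) := by
    have h1 : (2:ℝ)/k < 1 := by
      rw [div_lt_one hkpos]
      exact_mod_cast by omega
    calc (1/2 : ℝ) = (1/2 : ℝ) ^ (1:ℝ) := by norm_num
    _ < (1/2 : ℝ) ^ ((2:ℝ)/k) := by
        apply Real.rpow_lt_rpow_of_exponent_gt (by norm_num) (by norm_num) h1
  rw [hs2, ha2] at hle1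
  linarith
end

section
/- Let p ≥ 2 be a natural number and let x be a real number with |x| < 1. Then ∫_0^x (1 - t^p)^(-(p-1)/p) dt = Σ_{k=0}^∞ ( (∏_{i=0}^{k-1} ((p-1)/p + i)) / (k! · (k·p + 1)) ) · x^{k·p+1}, where the series on the right converges. -/
/-!
With `a = (p-1)/p`, the binomial series `(1 - u)^(-a) = ∑ a^{(k)} / k! · u^k` (for `|u| < 1`),
evaluated at `u = t^p`, expands the integrand. Its coefficients are nonnegative, so on `[0, x]`
the series is dominated termwise by its (convergent) value at `|x|`, and dominated convergence
lets us integrate it term by term.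
-/

open Real intervalIntegral Finset Polynomial

theorem ascPochhammer_eval_eq_prod_range {R : Type*} [CommSemiring R] (n : ℕ) (r : R) :
    (ascPochhammer R n).eval r = ∏ i ∈ range n, (r + i) := by
  induction n with
  | zero => simp
  | succ n ih => rw [ascPochhammer_succ_eval, ih, prod_range_succ]

theorem Ring.choose_add_sub_one_eq_prod_div_factorial (a : ℝ) (n : ℕ) :
    Ring.choose (a + n - 1) n = (∏ i ∈ range n, (a + i)) / n.factorial := by
  rw [Ring.choose_eq_smul, descPochhammer_smeval_eq_ascPochhammer, ascPochhammer_smeval_eq_eval,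
    ascPochhammer_eval_eq_prod_range, smul_eq_mul, inv_mul_eq_div]
  ring_nf

theorem Real.hasSum_one_sub_rpow_neg (a : ℝ) {u : ℝ} (hu : |u| < 1) :
    HasSum (fun n ↦ (∏ i ∈ range n, (a + i)) / n.factorial * u ^ n) ((1 - u) ^ (-a)) := by
  have h := (one_div_one_sub_rpow_hasFPowerSeriesOnBall_zero a).hasSum
    (y := u) (by simpa [enorm_eq_nnnorm, ← NNReal.coe_lt_coe] using hu)
  simp only [FormalMultilinearSeries.ofScalars_apply_eq,
    Ring.choose_add_sub_one_eq_prod_div_factorial, smul_eq_mul, zero_add] at h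
  rwa [rpow_neg (by linarith [(abs_lt.mp hu).2]), ← one_div]

theorem abs_le_of_mem_uIoc_zero {x t : ℝ} (ht : t ∈ Set.uIoc 0 x) : |t| ≤ |x| := by
  simpa using Set.abs_sub_left_of_mem_uIcc (Set.uIoc_subset_uIcc ht)

theorem hasSum_integral_of_hasSum_mul_pow {c : ℕ → ℝ} {e : ℕ → ℕ} {f : ℝ → ℝ} {x : ℝ}
    (hc : Summable fun n ↦ |c n| * |x| ^ e n)
    (hf : ∀ t ∈ Set.uIoc 0 x, HasSum (fun n ↦ c n * t ^ e n) (f t)) :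
    HasSum (fun n ↦ c n * x ^ (e n + 1) / (e n + 1)) (∫ t in 0..x, f t) := by
  have hbound (n : ℕ) (t : ℝ) (ht : t ∈ Set.uIoc 0 x) :
      ‖c n * t ^ e n‖ ≤ |c n| * |x| ^ e n := by
    rw [norm_mul, norm_pow, Real.norm_eq_abs, Real.norm_eq_abs]
    exact mul_le_mul_of_nonneg_left
      (pow_le_pow_left₀ (abs_nonneg t) (abs_le_of_mem_uIoc_zero ht) _) (abs_nonneg _)
  have h := hasSum_integral_of_dominated_convergence (μ := MeasureTheory.volume)
    (F := fun n t ↦ c n * t ^ e n) (fun n _ ↦ |c n| * |x| ^ e n)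
    (fun n ↦ (continuous_const.mul (continuous_pow (e n))).aestronglyMeasurable)
    (fun n ↦ .of_forall (hbound n)) (.of_forall fun _ _ ↦ hc) intervalIntegrable_const
    (.of_forall hf)
  have hterm (n : ℕ) : ∫ t in 0..x, c n * t ^ e n = c n * x ^ (e n + 1) / (e n + 1) := by
    rw [integral_const_mul, integral_pow, zero_pow (e n).succ_ne_zero, sub_zero, mul_div_assoc]
  simpa only [hterm] using h

/-- Taylor series of `arcsin_p`: for an integer `p ≥ 2` and `|x| < 1`,
`∫_0^x (1-t^p)^(-(p-1)/p) dt = Σ_k ((p-1)/p)^{(k)} x^{kp+1} / (k! (kp+1))`,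
where `a^{(k)}` is the rising factorial. -/
theorem arcsinp_taylor (p : ℕ) (hp : 2 ≤ p) (x : ℝ) (hx : |x| < 1) :
    HasSum
      (fun k : ℕ =>
        (∏ i ∈ Finset.range k, (((p : ℝ) - 1) / p + i))
          / ((k.factorial : ℝ) * (k * p + 1)) * x ^ (k * p + 1))
      (∫ t in (0 : ℝ)..x, (1 - t ^ p) ^ (-(((p : ℝ) - 1) / p))) := by
  set a : ℝ := ((p : ℝ) - 1) / p
  have ha : 0 ≤ a := div_nonneg (by linarith [show (2 : ℝ) ≤ p by exact_mod_cast hp]) p.cast_nonneg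
  set c : ℕ → ℝ := fun k ↦ (∏ i ∈ range k, (a + i)) / k.factorial
  have hc_nonneg (k : ℕ) : 0 ≤ c k :=
    div_nonneg (prod_nonneg fun i _ ↦ add_nonneg ha i.cast_nonneg) k.factorial.cast_nonneg
  have hseries {t : ℝ} (ht : |t| ≤ |x|) :
      HasSum (fun k ↦ c k * t ^ (k * p)) ((1 - t ^ p) ^ (-a)) := by
    simp_rw [mul_comm _ p, pow_mul]
    refine hasSum_one_sub_rpow_neg a ?_
    rw [abs_pow]
    exact pow_lt_one₀ (abs_nonneg t) (ht.trans_lt hx) (by omega)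
  have hsummable : Summable fun k ↦ |c k| * |x| ^ (k * p) := by
    simpa [abs_of_nonneg (hc_nonneg _)] using (hseries (abs_abs x).le).summable
  convert hasSum_integral_of_hasSum_mul_pow hsummable
    (fun t ht ↦ hseries (abs_le_of_mem_uIoc_zero ht)) using 2 with k
  push_cast
  simp only [c]
  field_simp
end

section
/- Let p ≥ 2 be a natural number. The function f : ℝ → ℝ defined by f(x) = ∫_0^x (1 - t^p)^(-(p-1)/p) dt is analytic at x = 0. -/
/-!
The integrand is the restriction to the real axis of `G z = (1 - z ^ p) ^ s`, which is holomorphic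
on the unit disc because `1 - z ^ p` stays in the right half-plane there. By Morera's theorem on
a disc, `G` has a holomorphic primitive `H` with `H 0 = 0`; then `x ↦ (H x).re` is real analytic
and, by the fundamental theorem of calculus, equals `x ↦ ∫ t in 0..x, (G t).re` on `(-1, 1)`.
-/

open Real intervalIntegral

open Complex Metric

theorem one_sub_pow_mem_slitPlane {z : ℂ} (hz : ‖z‖ < 1) {p : ℕ} (hp : p ≠ 0) :
    1 - z ^ p ∈ slitPlane := by
  rw [sub_eq_add_neg]
  refine mem_slitPlane_of_norm_lt_one ?_
  rwa [norm_neg, norm_pow, pow_lt_one_iff_of_nonneg (norm_nonneg z) hp]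

theorem differentiableOn_one_sub_pow_cpow {p : ℕ} (hp : p ≠ 0) (s : ℂ) :
    DifferentiableOn ℂ (fun z : ℂ => (1 - z ^ p) ^ s) (ball 0 1) :=
  ((differentiableOn_const 1).sub (differentiableOn_pow p)).cpow_const fun _ hz =>
    one_sub_pow_mem_slitPlane (mem_ball_zero_iff.1 hz) hp

theorem one_sub_pow_rpow_eq_re_cpow {t : ℝ} (ht : |t| ≤ 1) (p : ℕ) (s : ℝ) :
    (1 - t ^ p) ^ s = ((1 - (t : ℂ) ^ p) ^ (s : ℂ)).re := by
  have hbase : 0 ≤ 1 - t ^ p :=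
    sub_nonneg.2 ((le_abs_self _).trans (abs_pow t p ▸ pow_le_one₀ (abs_nonneg t) ht))
  rw [← ofReal_pow, ← ofReal_one, ← ofReal_sub, ← ofReal_cpow hbase, ofReal_re]

theorem analyticAt_intervalIntegral_of_eqOn_re {G : ℂ → ℂ} {g : ℝ → ℝ} {c r : ℝ} (hr : 0 < r)
    (hG : DifferentiableOn ℂ G (ball (c : ℂ) r)) (hg : Set.EqOn g (fun x => (G x).re) (ball c r)) :
    AnalyticAt ℝ (fun x => ∫ t in c..x, g t) c := by
  have hmem : ∀ x : ℝ, (x : ℂ) ∈ ball (c : ℂ) r ↔ x ∈ ball c r := fun x => by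
    simp only [mem_ball, isometry_ofReal.dist_eq]
  obtain ⟨H, hH0, hH⟩ := hG.isExactOn_ball.with_val_at (c : ℂ) 0
  have hHan : AnalyticAt ℂ H c :=
    DifferentiableOn.analyticAt (fun z hz => (hH z hz).differentiableAt.differentiableWithinAt)
      (ball_mem_nhds _ hr)
  have hderiv : ∀ x ∈ ball c r, HasDerivAt (fun y : ℝ => (H y).re) (g x) x := fun x hx =>
    hg hx ▸ (hH x ((hmem x).2 hx)).real_of_complex
  have hcont : ContinuousOn g (ball c r) :=
    (continuous_re.comp_continuousOn
      (hG.continuousOn.comp continuous_ofReal.continuousOn fun x hx => (hmem x).2 hx)).congr hg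
  refine hHan.re_ofReal.congr ?_
  filter_upwards [ball_mem_nhds c hr] with x hx
  have hsub : Set.uIcc c x ⊆ ball c r :=
    (convex_ball c r).ordConnected.uIcc_subset (mem_ball_self hr) hx
  rw [integral_eq_sub_of_hasDerivAt (fun t ht => hderiv t (hsub ht))
    ((hcont.mono hsub).intervalIntegrable), hH0, zero_re, sub_zero]

/-- For an integer `p ≥ 2`, the function `arcsin_p(x) = ∫_0^x (1-t^p)^(-(p-1)/p) dt`
is analytic at `x = 0`. -/
theorem arcsinp_analyticAt (p : ℕ) (hp : 2 ≤ p) :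
    AnalyticAt ℝ
      (fun x : ℝ => ∫ t in (0 : ℝ)..x, (1 - t ^ p) ^ (-(((p : ℝ) - 1) / p))) 0 := by
  set s : ℝ := -(((p : ℝ) - 1) / p)
  have hp0 : p ≠ 0 := by omega
  exact analyticAt_intervalIntegral_of_eqOn_re (G := fun z => (1 - z ^ p) ^ (s : ℂ)) one_pos
    (by simpa using differentiableOn_one_sub_pow_cpow hp0 s)
    fun t ht => one_sub_pow_rpow_eq_re_cpow (mem_ball_zero_iff.1 ht).le p s
end

section
/- Let f : ℝ → ℝ be defined by f(x) = ∫_0^x (1 - t^4)^(-3/4) dt, and suppose g : ℝ → ℝ is continuous at 0 with g(0) = 0 and f(g(x)) = x for all x in some neighborhood of 0 (so g = sin_4 near 0). Then (g(x) - x)/x^5 tends to -18/5! = -3/20 as x tends to 0 through nonzero values. -/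
/-!
By l'Hôpital, `arcsin_4 y - y ~ (3/20) y^5`: its derivative `(1 - y^4)^(-3/4) - 1` behaves like
`(3/4) y^4`, the slope of `x ↦ x^(-3/4)` at `1` read along `x = 1 - y^4`. Writing
`x = arcsin_4 (g x) = g x + (3/20) (g x)^5 + o(x^5)` for the local inverse `g` first gives
`g x ~ x`, and then `g x - x = -(3/20) x^5 + o(x^5)`.
-/

open Real intervalIntegral Filter Topology

theorem eventually_continuousAt_one_sub_pow_rpow {n : ℕ} (hn : n ≠ 0) (a : ℝ) :
    ∀ᶠ y in 𝓝 (0 : ℝ), ContinuousAt (fun t : ℝ => (1 - t ^ n) ^ a) y := by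
  have hcont : Continuous fun t : ℝ => 1 - t ^ n := by fun_prop
  filter_upwards [hcont.continuousAt.eventually_ne (by simp [hn] : (1 : ℝ) - 0 ^ n ≠ 0)]
    with y hy
  exact hcont.continuousAt.rpow_const (Or.inl hy)

theorem tendsto_one_sub_pow_rpow_sub_one_div_pow {n : ℕ} (hn : n ≠ 0) (a : ℝ) :
    Tendsto (fun y : ℝ => ((1 - y ^ n) ^ a - 1) / y ^ n) (𝓝[≠] 0) (𝓝 (-a)) := by
  have hslope : Tendsto (slope (fun x : ℝ => x ^ a) 1) (𝓝[≠] 1) (𝓝 a) := by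
    simpa using hasDerivAt_iff_tendsto_slope.mp
      (Real.hasDerivAt_rpow_const (x := 1) (p := a) (Or.inl one_ne_zero))
  have hu : Tendsto (fun y : ℝ => 1 - y ^ n) (𝓝[≠] 0) (𝓝[≠] 1) := by
    refine tendsto_nhdsWithin_iff.mpr ⟨?_, ?_⟩
    · exact tendsto_nhdsWithin_of_tendsto_nhds
        ((by fun_prop : Continuous fun y : ℝ => 1 - y ^ n).tendsto' 0 1 (by simp [hn]))
    · filter_upwards [self_mem_nhdsWithin] with y (hy : y ≠ 0)
      simpa [sub_eq_self] using pow_ne_zero n hy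
  refine (hslope.comp hu).neg.congr' ?_
  filter_upwards [self_mem_nhdsWithin] with y (hy : y ≠ 0)
  simp only [Function.comp, slope_def_field, one_rpow]
  rw [sub_sub_cancel_left, div_neg, neg_neg]

theorem eventually_hasDerivAt_integral_of_eventually_continuousAt {h : ℝ → ℝ}
    (hc : ∀ᶠ y in 𝓝 0, ContinuousAt h y) :
    ∀ᶠ y in 𝓝 0, HasDerivAt (fun u => ∫ t in (0 : ℝ)..u, h t) (h y) y := by
  obtain ⟨ε, hε, hball⟩ := Metric.eventually_nhds_iff_ball.mp hc
  filter_upwards [Metric.ball_mem_nhds 0 hε] with y hy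
  have hsub : Set.uIcc 0 y ⊆ Metric.ball 0 ε :=
    (convex_ball 0 ε).ordConnected.uIcc_subset (Metric.mem_ball_self hε) hy
  exact integral_hasDerivAt_right
    (ContinuousOn.intervalIntegrable fun t ht => (hball t (hsub ht)).continuousWithinAt)
    (ContinuousAt.stronglyMeasurableAtFilter Metric.isOpen_ball hball y hy) (hball y hy)

theorem tendsto_integral_sub_div_pow_succ {h : ℝ → ℝ} {n : ℕ} {L : ℝ}
    (hc : ∀ᶠ y in 𝓝 0, ContinuousAt h y)
    (hL : Tendsto (fun y => (h y - 1) / y ^ n) (𝓝[≠] 0) (𝓝 L)) :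
    Tendsto (fun y => ((∫ t in (0 : ℝ)..y, h t) - y) / y ^ (n + 1)) (𝓝[≠] 0)
      (𝓝 (L / (n + 1))) := by
  have hderiv : ∀ᶠ y in 𝓝 0,
      HasDerivAt (fun u => (∫ t in (0 : ℝ)..u, h t) - u) (h y - 1) y := by
    filter_upwards [eventually_hasDerivAt_integral_of_eventually_continuousAt hc] with y hy
    exact hy.sub (hasDerivAt_id y)
  have hpow : ∀ᶠ y : ℝ in 𝓝 0, HasDerivAt (fun u : ℝ => u ^ (n + 1)) ((n + 1 : ℕ) * y ^ n) y :=
    Eventually.of_forall fun y => by simpa using hasDerivAt_pow (n + 1) y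
  have hzero : Tendsto (fun u => (∫ t in (0 : ℝ)..u, h t) - u) (𝓝[≠] 0) (𝓝 0) := by
    simpa using hderiv.self_of_nhds.continuousAt.tendsto.mono_left nhdsWithin_le_nhds
  refine HasDerivAt.lhopital_zero_nhdsNE (hderiv.filter_mono nhdsWithin_le_nhds)
    (hpow.filter_mono nhdsWithin_le_nhds) ?_ hzero ?_ ?_
  · filter_upwards [self_mem_nhdsWithin] with y (hy : y ≠ 0)
    exact mul_ne_zero (by positivity) (pow_ne_zero n hy)
  · exact tendsto_nhdsWithin_of_tendsto_nhds
      (by simpa using (continuous_pow (n + 1)).tendsto (0 : ℝ))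
  · refine (hL.div_const (n + 1)).congr fun y => ?_
    push_cast
    rw [div_div, mul_comm]

theorem tendsto_nhdsNE_of_leftInverse {F g : ℝ → ℝ} (hg : ContinuousAt g 0) (hg0 : g 0 = 0)
    (hFg : ∀ᶠ x in 𝓝 0, F (g x) = x) : Tendsto g (𝓝[≠] 0) (𝓝[≠] 0) := by
  have hF0 : F 0 = 0 := by simpa [hg0] using hFg.self_of_nhds
  refine tendsto_nhdsWithin_iff.mpr ⟨?_, ?_⟩
  · exact tendsto_nhdsWithin_of_tendsto_nhds (by simpa [hg0] using hg.tendsto)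
  · filter_upwards [eventually_nhdsWithin_of_eventually_nhds hFg, self_mem_nhdsWithin]
      with x hx (hx0 : x ≠ 0) hgx
    rw [hgx, hF0] at hx
    exact hx0 hx.symm

theorem tendsto_sub_div_pow_of_leftInverse {F g : ℝ → ℝ} {m : ℕ} {c : ℝ} (hm : 2 ≤ m)
    (hF : Tendsto (fun y => (F y - y) / y ^ m) (𝓝[≠] 0) (𝓝 c))
    (hg : ContinuousAt g 0) (hg0 : g 0 = 0) (hFg : ∀ᶠ x in 𝓝 0, F (g x) = x) :
    Tendsto (fun x => (g x - x) / x ^ m) (𝓝[≠] 0) (𝓝 (-c)) := by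
  obtain ⟨k, rfl⟩ := Nat.exists_eq_add_of_le' hm
  have hg' := tendsto_nhdsNE_of_leftInverse hg hg0 hFg
  have hgne : ∀ᶠ x in 𝓝[≠] 0, g x ≠ 0 := hg' self_mem_nhdsWithin
  have hquot : Tendsto (fun x => (x - g x) / g x ^ (k + 2)) (𝓝[≠] 0) (𝓝 c) := by
    refine (hF.comp hg').congr' ?_
    filter_upwards [eventually_nhdsWithin_of_eventually_nhds hFg] with x hx
    simp only [Function.comp, hx]
  have hinv_ratio : Tendsto (fun x => x / g x) (𝓝[≠] 0) (𝓝 1) := by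
    have hsmall : Tendsto (fun x => g x ^ (k + 1)) (𝓝[≠] 0) (𝓝 0) := by
      simpa using (hg'.mono_right nhdsWithin_le_nhds).pow (k + 1)
    -- `x / g x = 1 + (x - g x) / g x ^ (k + 2) * g x ^ (k + 1)`
    have := (hquot.mul hsmall).const_add 1
    rw [mul_zero, add_zero] at this
    refine this.congr' ?_
    filter_upwards [hgne] with x hx
    field_simp
    ring
  have hratio : Tendsto (fun x => g x / x) (𝓝[≠] 0) (𝓝 1) := by
    simpa using hinv_ratio.inv₀ one_ne_zero
  have := hquot.neg.mul (hratio.pow (k + 2))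
  rw [one_pow, mul_one] at this
  refine this.congr' ?_
  filter_upwards [hgne] with x hx
  rw [div_pow, neg_mul, div_mul_div_comm, mul_comm, mul_div_mul_left _ _ (pow_ne_zero _ hx),
    ← neg_div, neg_sub]

/-- `lim_{x → 0} (sin_4 x - x) / x^5 = -18/5! = -3/20`, where `sin_4` is the
local inverse at `0` of `arcsin_4(x) = ∫_0^x (1-t^4)^(-3/4) dt`. -/
theorem sin4_sub_id_div_pow5 (f g : ℝ → ℝ)
    (hf : f = fun x : ℝ => ∫ t in (0 : ℝ)..x, (1 - t ^ 4) ^ (-(3 / 4 : ℝ)))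
    (hg : ContinuousAt g 0) (hg0 : g 0 = 0)
    (hfg : ∀ᶠ x in 𝓝 (0 : ℝ), f (g x) = x) :
    Tendsto (fun x : ℝ => (g x - x) / x ^ 5) (𝓝[≠] 0) (𝓝 (-(3 / 20 : ℝ))) := by
  have harcsin : Tendsto (fun y => (f y - y) / y ^ (4 + 1)) (𝓝[≠] 0)
      (𝓝 (-(-(3 / 4 : ℝ)) / (4 + 1))) := by
    subst hf
    exact_mod_cast tendsto_integral_sub_div_pow_succ
      (eventually_continuousAt_one_sub_pow_rpow four_ne_zero _)
      (tendsto_one_sub_pow_rpow_sub_one_div_pow four_ne_zero _)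
  convert tendsto_sub_div_pow_of_leftInverse le_add_self harcsin hg hg0 hfg using 2
  norm_num
end

section
/- Let p ≥ 1 be a real number. The Lebesgue area (two-dimensional volume) of the region {(x, y) ∈ ℝ² : |x|^p + |y|^p ≤ 1} enclosed by the unit p-circle equals π_p := 2 ∫_0^1 (1 - t^p)^(-(p-1)/p) dt. -/
open Real intervalIntegral MeasureTheory Set

/-!
Over each `x ∈ [-1, 1]` the vertical slice of the region is the segment
`|y| ≤ (1 - |x|^p)^(1/p)`, so by Fubini and symmetry the area is `4 ∫_0^1 (1 - t^p)^(1/p) dt`.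
Integrating `d/dt [t (1 - t^p)^(1/p)] = 2 (1 - t^p)^(1/p) - (1 - t^p)^(1/p - 1)` over `[0, 1]`
shows that `∫_0^1 (1 - t^p)^(1/p - 1) dt` is twice that integral; the integrand is integrable
near `t = 1` because `1 - t^p ≥ 1 - t` and `1/p - 1 > -1`.
-/

lemma integral_even_eq_two_mul {f : ℝ → ℝ} {a : ℝ} (hf : ∀ x, f (-x) = f x)
    (hint : IntervalIntegrable f volume (-a) a) :
    ∫ x in -a..a, f x = 2 * ∫ x in 0..a, f x := by
  have hzero : (0 : ℝ) ∈ uIcc (-a) a := by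
    rcases le_total 0 a with ha | ha <;> simp [ha]
  have hleft := hint.mono_set (uIcc_subset_uIcc left_mem_uIcc hzero)
  have hright := hint.mono_set (uIcc_subset_uIcc hzero right_mem_uIcc)
  have hreflect : ∫ x in -a..0, f x = ∫ x in 0..a, f x := by
    simpa [hf] using (integral_comp_neg (a := 0) (b := a) f).symm
  rw [← integral_add_adjacent_intervals hleft hright, hreflect, two_mul]

def pDisk (p : ℝ) : Set (ℝ × ℝ) := {q | |q.1| ^ p + |q.2| ^ p ≤ 1}

noncomputable def pCircleHeight (p x : ℝ) : ℝ := (1 - |x| ^ p) ^ p⁻¹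

section
variable {p : ℝ}

lemma continuous_pCircleHeight (hp : 0 < p) : Continuous (pCircleHeight p) :=
  (continuous_const.sub (continuous_abs.rpow_const fun _ => Or.inr hp.le)).rpow_const
    fun _ => Or.inr (inv_nonneg.2 hp.le)

lemma pCircleHeight_neg (x : ℝ) : pCircleHeight p (-x) = pCircleHeight p x := by
  simp only [pCircleHeight, abs_neg]

lemma pCircleHeight_nonneg (hp : 0 < p) {x : ℝ} (hx : |x| ≤ 1) : 0 ≤ pCircleHeight p x :=
  rpow_nonneg (sub_nonneg.2 (rpow_le_one (abs_nonneg x) hx hp.le)) _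

lemma pCircleHeight_rpow (hp : 0 < p) {x : ℝ} (hx : |x| ≤ 1) :
    pCircleHeight p x ^ p = 1 - |x| ^ p := by
  rw [pCircleHeight, ← rpow_mul (sub_nonneg.2 (rpow_le_one (abs_nonneg x) hx hp.le)),
    inv_mul_cancel₀ hp.ne', rpow_one]

lemma preimage_mk_pDisk_of_abs_le (hp : 0 < p) {x : ℝ} (hx : |x| ≤ 1) :
    Prod.mk x ⁻¹' pDisk p = Icc (-pCircleHeight p x) (pCircleHeight p x) := by
  ext y
  rw [mem_Icc, ← abs_le, ← rpow_le_rpow_iff (abs_nonneg y) (pCircleHeight_nonneg hp hx) hp,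
    pCircleHeight_rpow hp hx]
  exact (le_sub_iff_add_le' (b := |y| ^ p)).symm

lemma preimage_mk_pDisk_of_one_lt_abs (hp : 0 < p) {x : ℝ} (hx : 1 < |x|) :
    Prod.mk x ⁻¹' pDisk p = ∅ := by
  refine eq_empty_of_forall_notMem fun y hy => ?_
  have hxp : 1 < |x| ^ p := one_lt_rpow hx hp
  have : 0 ≤ |y| ^ p := rpow_nonneg (abs_nonneg y) p
  exact absurd hy (by simp only [pDisk, mem_preimage, mem_ofPred_eq]; linarith)

lemma volume_preimage_mk_pDisk (hp : 0 < p) (x : ℝ) :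
    volume (Prod.mk x ⁻¹' pDisk p) =
      (Icc (-1) 1).indicator (fun x => ENNReal.ofReal (2 * pCircleHeight p x)) x := by
  by_cases hx : |x| ≤ 1
  · rw [preimage_mk_pDisk_of_abs_le hp hx, volume_Icc,
      indicator_of_mem (show x ∈ Icc (-1 : ℝ) 1 from abs_le.1 hx)]
    ring_nf
  · rw [preimage_mk_pDisk_of_one_lt_abs hp (not_le.1 hx), measure_empty,
      indicator_of_notMem (show x ∉ Icc (-1 : ℝ) 1 from mt abs_le.2 hx)]

lemma measurableSet_pDisk (hp : 0 < p) : MeasurableSet (pDisk p) := by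
  have hcont : Continuous fun q : ℝ × ℝ => |q.1| ^ p + |q.2| ^ p :=
    (continuous_abs.comp continuous_fst |>.rpow_const fun _ => Or.inr hp.le).add
      (continuous_abs.comp continuous_snd |>.rpow_const fun _ => Or.inr hp.le)
  exact (isClosed_le hcont continuous_const).measurableSet

lemma volume_pDisk (hp : 0 < p) :
    volume (pDisk p) = ENNReal.ofReal (4 * ∫ t in (0 : ℝ)..1, (1 - t ^ p) ^ p⁻¹) := by
  have hint : IntegrableOn (fun x => 2 * pCircleHeight p x) (Icc (-1) 1) :=
    ((continuous_pCircleHeight hp).const_mul 2).integrableOn_Icc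
  have hnonneg : 0 ≤ᵐ[volume.restrict (Icc (-1) 1)] fun x => 2 * pCircleHeight p x :=
    ae_restrict_of_forall_mem measurableSet_Icc fun x hx =>
      mul_nonneg zero_le_two (pCircleHeight_nonneg hp (abs_le.2 hx))
  have hhalf : ∫ x in (0 : ℝ)..1, pCircleHeight p x = ∫ t in (0 : ℝ)..1, (1 - t ^ p) ^ p⁻¹ :=
    integral_congr fun t ht => by
      rw [uIcc_of_le zero_le_one] at ht
      simp only [pCircleHeight, abs_of_nonneg ht.1]
  rw [Measure.volume_eq_prod, Measure.prod_apply (measurableSet_pDisk hp),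
    funext (volume_preimage_mk_pDisk hp), lintegral_indicator measurableSet_Icc,
    ← ofReal_integral_eq_lintegral_ofReal hint hnonneg, integral_Icc_eq_integral_Ioc,
    ← integral_of_le (by norm_num),
    integral_even_eq_two_mul (fun x => by rw [pCircleHeight_neg])
      (((continuous_pCircleHeight hp).const_mul 2).intervalIntegrable _ _),
    intervalIntegral.integral_const_mul, hhalf]
  ring_nf

lemma hasDerivAt_mul_one_sub_rpow_rpow_inv (hp : 0 < p) {t : ℝ} (ht : t ∈ Ioo 0 1) :
    HasDerivAt (fun t => t * (1 - t ^ p) ^ p⁻¹)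
      (2 * (1 - t ^ p) ^ p⁻¹ - (1 - t ^ p) ^ (p⁻¹ - 1)) t := by
  have hu : 0 < 1 - t ^ p := sub_pos.2 (rpow_lt_one ht.1.le ht.2 hp)
  have hderiv := (hasDerivAt_id' t).mul
    (((hasDerivAt_rpow_const (p := p) (Or.inl ht.1.ne')).const_sub 1).rpow_const
      (p := p⁻¹) (Or.inl hu.ne'))
  refine hderiv.congr_deriv ?_
  have htp : t * t ^ (p - 1) = t ^ p := by
    rw [← rpow_one_add' ht.1.le (by simp [hp.ne']), add_sub_cancel]
  have hup : (1 - t ^ p) ^ p⁻¹ = (1 - t ^ p) * (1 - t ^ p) ^ (p⁻¹ - 1) := by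
    rw [← rpow_one_add' hu.le (by simp [hp.ne']), add_sub_cancel]
  rw [hup]
  linear_combination (-(1 - t ^ p) ^ (p⁻¹ - 1)) * htp
    + (-t * t ^ (p - 1) * (1 - t ^ p) ^ (p⁻¹ - 1)) * mul_inv_cancel₀ hp.ne'

lemma intervalIntegrable_one_sub_rpow_rpow_inv_sub_one (hp : 1 ≤ p) :
    IntervalIntegrable (fun t => (1 - t ^ p) ^ (p⁻¹ - 1)) volume 0 1 := by
  have hexp : p⁻¹ - 1 ≤ 0 := sub_nonpos.2 (inv_le_one_of_one_le₀ hp)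
  have hdom : IntervalIntegrable (fun t => (1 - t) ^ (p⁻¹ - 1)) volume 0 1 := by
    simpa using ((intervalIntegrable_rpow' (a := 0) (b := 1)
      (by linarith [inv_pos.2 (zero_lt_one.trans_le hp)])).comp_sub_left 1).symm
  have hmeas : Measurable fun t : ℝ => (1 - t ^ p) ^ (p⁻¹ - 1) := by fun_prop
  refine hdom.mono_fun hmeas.aestronglyMeasurable ?_
  rw [uIoc_of_le zero_le_one]
  refine ae_restrict_of_forall_mem measurableSet_Ioc fun t ht => ?_
  have htp : t ^ p ≤ t := by
    simpa using rpow_le_rpow_of_exponent_ge ht.1 ht.2 hp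
  rcases ht.2.eq_or_lt with rfl | ht1
  · simp
  · dsimp only
    rw [norm_of_nonneg (rpow_nonneg (sub_nonneg.2 (htp.trans ht.2)) _),
      norm_of_nonneg (rpow_nonneg (sub_nonneg.2 ht.2) _)]
    exact rpow_le_rpow_of_nonpos (sub_pos.2 ht1) (by linarith) hexp

lemma integral_one_sub_rpow_rpow_inv_sub_one (hp : 1 ≤ p) :
    ∫ t in (0 : ℝ)..1, (1 - t ^ p) ^ (p⁻¹ - 1) = 2 * ∫ t in (0 : ℝ)..1, (1 - t ^ p) ^ p⁻¹ := by
  have hp0 : 0 < p := zero_lt_one.trans_le hp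
  have hcont : Continuous fun t : ℝ => (1 - t ^ p) ^ p⁻¹ :=
    (continuous_const.sub (continuous_id.rpow_const fun _ => Or.inr hp0.le)).rpow_const
      fun _ => Or.inr (inv_nonneg.2 hp0.le)
  have hint := (hcont.intervalIntegrable (μ := volume) 0 1).const_mul 2
  have hint' := intervalIntegrable_one_sub_rpow_rpow_inv_sub_one hp
  have hftc := integral_eq_sub_of_hasDerivAt_of_le zero_le_one
    (continuous_id'.mul hcont).continuousOn
    (fun t ht => hasDerivAt_mul_one_sub_rpow_rpow_inv hp0 ht) (hint.sub hint')
  rw [integral_sub hint hint', intervalIntegral.integral_const_mul] at hftc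
  simp only [Pi.mul_apply, one_rpow, sub_self, zero_rpow (inv_ne_zero hp0.ne'), mul_zero,
    zero_mul] at hftc
  linarith

end

/-- The area enclosed by the unit p-circle `|x|^p + |y|^p ≤ 1` equals
`π_p = 2 ∫_0^1 (1-t^p)^(-(p-1)/p) dt`. -/
theorem area_pcircle (p : ℝ) (hp : 1 ≤ p) :
    volume {q : ℝ × ℝ | |q.1| ^ p + |q.2| ^ p ≤ 1}
      = ENNReal.ofReal (2 * ∫ t in (0 : ℝ)..1, (1 - t ^ p) ^ (-(p - 1) / p)) := by
  have hexp : -(p - 1) / p = p⁻¹ - 1 := by field_simp; ring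
  rw [hexp, integral_one_sub_rpow_rpow_inv_sub_one hp, ← mul_assoc, two_mul, two_add_two_eq_four]
  exact volume_pDisk (zero_lt_one.trans_le hp)
end

section
/- For every real number p ≥ 1, the generalized π value satisfies 2 ≤ π_p < 4, where π_p := 2 ∫_0^1 (1 - t^p)^(-(p-1)/p) dt. -/
/-!
Write `a = (p - 1) / p ∈ [0, 1)` and `f t = (1 - t ^ p) ^ (-a)`. Since `0 < 1 - t ^ p ≤ 1` on
`(0, 1)`, `f ≥ 1` there, whence `π_p ≥ 2`. For the upper bound,
`1 - t ^ (p - 1) < 1 - t ^ p ≤ (1 - t ^ p) ^ a`, i.e. `f t < t ^ (p - 1) * f t + 1`, and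
`t ^ (p - 1) * f t` is the derivative of `-(1 - t ^ p) ^ (1 / p)`, so its integral over `[0, 1]`
is `1`. Hence `∫₀¹ f < 2`.
-/

open Real intervalIntegral MeasureTheory Set

theorem IntervalIntegrable.of_nonneg_of_le_on_Ioo {f g : ℝ → ℝ} {a b : ℝ} (hab : a ≤ b)
    (hg : IntervalIntegrable g volume a b) (hf : AEStronglyMeasurable f volume)
    (hf_nonneg : ∀ x ∈ Ioo a b, 0 ≤ f x) (hfg : ∀ x ∈ Ioo a b, f x ≤ g x) :
    IntervalIntegrable f volume a b := by
  rw [intervalIntegrable_iff_integrableOn_Ioo_of_le hab] at hg ⊢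
  refine hg.mono' hf.restrict (ae_restrict_of_forall_mem measurableSet_Ioo fun x hx => ?_)
  rw [norm_of_nonneg (hf_nonneg x hx)]
  exact hfg x hx

theorem intervalIntegral.integral_lt_integral_of_lt_on_Ioo {f g : ℝ → ℝ} {a b : ℝ}
    (hab : a < b) (hf : IntervalIntegrable f volume a b) (hg : IntervalIntegrable g volume a b)
    (hfg : ∀ x ∈ Ioo a b, f x < g x) :
    ∫ x in a..b, f x < ∫ x in a..b, g x := by
  have := intervalIntegral_pos_of_pos_on (hg.sub hf) (fun x hx => sub_pos.2 (hfg x hx)) hab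
  rwa [integral_sub hg hf, sub_pos] at this

section

variable {p : ℝ}

theorem one_sub_rpow_pos (hp : 0 < p) {x : ℝ} (hx : x ∈ Ico 0 1) : 0 < 1 - x ^ p :=
  sub_pos.2 (rpow_lt_one hx.1 hx.2 hp)

theorem continuous_one_sub_rpow_rpow_inv (hp : 0 < p) :
    Continuous fun t : ℝ => (1 - t ^ p) ^ p⁻¹ := by
  have hpow : Continuous fun t : ℝ => t ^ p := continuous_rpow_const hp.le
  exact continuous_rpow_const (inv_pos.2 hp).le |>.comp (continuous_const.sub hpow)

theorem hasDerivAt_neg_one_sub_rpow_rpow_inv (hp : 0 < p) {x : ℝ} (hx : x ∈ Ioo 0 1) :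
    HasDerivAt (fun t => -(1 - t ^ p) ^ p⁻¹) (x ^ (p - 1) * (1 - x ^ p) ^ (-(p - 1) / p)) x := by
  have hbase := one_sub_rpow_pos hp (Ioo_subset_Ico_self hx)
  have hinner : HasDerivAt (fun t : ℝ => 1 - t ^ p) (-(p * x ^ (p - 1))) x := by
    simpa using (hasDerivAt_rpow_const (Or.inl hx.1.ne')).const_sub 1
  have hexp : p⁻¹ - 1 = -(p - 1) / p := by field_simp; ring
  refine ((hasDerivAt_rpow_const (Or.inl hbase.ne')).comp x hinner).neg.congr_deriv ?_
  rw [hexp]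
  field_simp

theorem intervalIntegrable_rpow_sub_one_mul_one_sub_rpow (hp : 0 < p) :
    IntervalIntegrable (fun t => t ^ (p - 1) * (1 - t ^ p) ^ (-(p - 1) / p)) volume 0 1 := by
  rw [intervalIntegrable_iff_integrableOn_Ioc_of_le zero_le_one]
  refine integrableOn_deriv_of_nonneg (continuous_one_sub_rpow_rpow_inv hp).neg.continuousOn
    (fun x hx => hasDerivAt_neg_one_sub_rpow_rpow_inv hp hx) fun x hx => ?_
  exact mul_nonneg (rpow_nonneg hx.1.le _)
    (rpow_nonneg (one_sub_rpow_pos hp (Ioo_subset_Ico_self hx)).le _)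

theorem integral_rpow_sub_one_mul_one_sub_rpow (hp : 0 < p) :
    ∫ t in (0 : ℝ)..1, t ^ (p - 1) * (1 - t ^ p) ^ (-(p - 1) / p) = 1 := by
  rw [integral_eq_sub_of_hasDerivAt_of_le zero_le_one
    (continuous_one_sub_rpow_rpow_inv hp).neg.continuousOn
    (fun x hx => hasDerivAt_neg_one_sub_rpow_rpow_inv hp hx)
    (intervalIntegrable_rpow_sub_one_mul_one_sub_rpow hp)]
  simp [zero_rpow hp.ne', zero_rpow (inv_pos.2 hp).ne']

theorem one_le_one_sub_rpow_rpow (hp : 0 < p) {a : ℝ} (ha : a ≤ 0) {x : ℝ}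
    (hx : x ∈ Ico 0 1) : 1 ≤ (1 - x ^ p) ^ a :=
  one_le_rpow_of_pos_of_le_one_of_nonpos (one_sub_rpow_pos hp hx)
    (sub_le_self _ (rpow_nonneg hx.1 p)) ha

theorem one_sub_rpow_rpow_lt (hp : 1 ≤ p) {x : ℝ} (hx : x ∈ Ioo 0 1) :
    (1 - x ^ p) ^ (-(p - 1) / p) < x ^ (p - 1) * (1 - x ^ p) ^ (-(p - 1) / p) + 1 := by
  have hp0 : 0 < p := by linarith
  set a := (p - 1) / p
  have hbase := one_sub_rpow_pos hp0 (Ioo_subset_Ico_self hx)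
  have ha : a ≤ 1 := (div_le_one hp0).2 (by linarith)
  have hlt : 1 - x ^ (p - 1) < (1 - x ^ p) ^ a :=
    calc 1 - x ^ (p - 1) < 1 - x ^ p := by
          have := rpow_lt_rpow_of_exponent_gt hx.1 hx.2 (sub_one_lt p)
          linarith
      _ ≤ (1 - x ^ p) ^ a :=
          self_le_rpow_of_le_one hbase.le (sub_le_self _ (rpow_nonneg hx.1.le p)) ha
  have hf : (1 - x ^ p) ^ (-(p - 1) / p) = ((1 - x ^ p) ^ a)⁻¹ := by
    rw [neg_div, rpow_neg hbase.le]
  have hpos : 0 < (1 - x ^ p) ^ a := rpow_pos_of_pos hbase a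
  have key := (div_lt_one hpos).2 hlt
  rw [div_eq_mul_inv, sub_mul, one_mul] at key
  rw [hf]
  linarith

theorem intervalIntegrable_one_sub_rpow_rpow (hp : 1 ≤ p) :
    IntervalIntegrable (fun t => (1 - t ^ p) ^ (-(p - 1) / p)) volume 0 1 := by
  have hp0 : 0 < p := by linarith
  have hmeas : Measurable fun t : ℝ => (1 - t ^ p) ^ (-(p - 1) / p) :=
    (measurable_const.sub (measurable_id.pow_const p)).pow_const _
  exact ((intervalIntegrable_rpow_sub_one_mul_one_sub_rpow hp0).add intervalIntegrable_const)
    |>.of_nonneg_of_le_on_Ioo zero_le_one hmeas.aestronglyMeasurable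
      (fun x hx => rpow_nonneg (one_sub_rpow_pos hp0 (Ioo_subset_Ico_self hx)).le _)
      fun x hx => (one_sub_rpow_rpow_lt hp hx).le

theorem one_le_integral_one_sub_rpow_rpow (hp : 1 ≤ p) :
    1 ≤ ∫ t in (0 : ℝ)..1, (1 - t ^ p) ^ (-(p - 1) / p) := by
  simpa using integral_mono_on_of_le_Ioo zero_le_one intervalIntegrable_const
    (intervalIntegrable_one_sub_rpow_rpow hp) fun x hx =>
      one_le_one_sub_rpow_rpow (p := p) (by linarith)
        (div_nonpos_of_nonpos_of_nonneg (by linarith) (by linarith)) (Ioo_subset_Ico_self hx)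

theorem integral_one_sub_rpow_rpow_lt_two (hp : 1 ≤ p) :
    ∫ t in (0 : ℝ)..1, (1 - t ^ p) ^ (-(p - 1) / p) < 2 := by
  have hg := intervalIntegrable_rpow_sub_one_mul_one_sub_rpow (p := p) (by linarith)
  calc _ < ∫ t in (0 : ℝ)..1, (t ^ (p - 1) * (1 - t ^ p) ^ (-(p - 1) / p) + 1) :=
        integral_lt_integral_of_lt_on_Ioo zero_lt_one (intervalIntegrable_one_sub_rpow_rpow hp)
          (hg.add intervalIntegrable_const) fun x hx => one_sub_rpow_rpow_lt hp hx
    _ = 2 := by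
        rw [integral_add hg intervalIntegrable_const,
          integral_rpow_sub_one_mul_one_sub_rpow (by linarith)]
        norm_num

end

/-- For every `p ≥ 1`, the generalized π value
`π_p = 2 ∫_0^1 (1-t^p)^(-(p-1)/p) dt` satisfies `2 ≤ π_p < 4`. -/
theorem pi_p_bounds (p : ℝ) (hp : 1 ≤ p) :
    2 ≤ 2 * (∫ t in (0 : ℝ)..1, (1 - t ^ p) ^ (-(p - 1) / p)) ∧
    2 * (∫ t in (0 : ℝ)..1, (1 - t ^ p) ^ (-(p - 1) / p)) < 4 := by
  have lower := one_le_integral_one_sub_rpow_rpow hp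
  have upper := integral_one_sub_rpow_rpow_lt_two hp
  constructor <;> linarith
end

section
/- For every real number p ≥ 1, π_p = 2·Γ(1/p)² / (p·Γ(2/p)), where π_p := 2 ∫_0^1 (1 - t^p)^(-(p-1)/p) dt and Γ is the Gamma function. -/
/-! The substitution `x = t ^ p` turns `∫_0^1 (1 - t^p)^(1/p - 1) dt` into `B(1/p, 1/p) / p`,
and Euler's formula `B(a, b) = Γ(a) Γ(b) / Γ(a + b)` evaluates the Beta integral. -/

open Real intervalIntegral MeasureTheory Set

theorem intervalIntegral.integral_zero_one_comp_rpow {E : Type*} [NormedAddCommGroup E]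
    [NormedSpace ℝ E] (g : ℝ → E) {p : ℝ} (hp : 0 < p) :
    ∫ t in (0 : ℝ)..1, (p * t ^ (p - 1)) • g (t ^ p) = ∫ x in (0 : ℝ)..1, g x := by
  -- cut `g` off beyond `1` and substitute on `Ioi 0`, where `t ^ p ≤ 1 ↔ t ≤ 1`
  have hIoc : Ioi (0 : ℝ) ∩ Iic 1 = Ioc 0 1 := Ioi_inter_Iic
  have h := integral_comp_rpow_Ioi_of_pos (g := (Iic 1).indicator g) hp
  rw [setIntegral_indicator measurableSet_Iic, hIoc] at h
  rw [integral_of_le zero_le_one, integral_of_le zero_le_one, ← h, ← hIoc,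
    ← setIntegral_indicator measurableSet_Iic]
  refine setIntegral_congr_fun measurableSet_Ioi fun t (ht : 0 < t) => ?_
  have hle : t ^ p ≤ 1 ↔ t ≤ 1 := by
    simpa using rpow_le_rpow_iff ht.le zero_le_one hp
  by_cases h1 : t ≤ 1
  · simp [h1, hle.mpr h1]
  · simp [h1, mt hle.mp h1]

theorem integral_rpow_mul_one_sub_rpow_comp_rpow {p : ℝ} (hp : 0 < p) (a b : ℝ) :
    p * ∫ t in (0 : ℝ)..1, t ^ (p * a - 1) * (1 - t ^ p) ^ (b - 1)
      = ∫ x in (0 : ℝ)..1, x ^ (a - 1) * (1 - x) ^ (b - 1) := by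
  rw [← integral_zero_one_comp_rpow (fun x => x ^ (a - 1) * (1 - x) ^ (b - 1)) hp,
    ← intervalIntegral.integral_const_mul]
  refine integral_congr_ae (ae_of_all _ fun t ht => ?_)
  rw [uIoc_of_le zero_le_one] at ht
  have hpow : t ^ (p * a - 1) = (t ^ p) ^ (a - 1) * t ^ (p - 1) := by
    rw [← rpow_mul ht.1.le, ← rpow_add ht.1]
    ring_nf
  rw [hpow, smul_eq_mul]
  ring

theorem Complex.betaIntegral_ofReal (a b : ℝ) :
    betaIntegral a b = ∫ x in (0 : ℝ)..1, x ^ (a - 1) * (1 - x) ^ (b - 1) := by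
  rw [betaIntegral, ← intervalIntegral.integral_ofReal]
  refine integral_congr fun x hx => ?_
  rw [uIcc_of_le zero_le_one] at hx
  rw [ofReal_mul, ofReal_cpow hx.1, ofReal_cpow (sub_nonneg.mpr hx.2)]
  push_cast
  rfl

theorem Real.Gamma_mul_Gamma_eq_integral {a b : ℝ} (ha : 0 < a) (hb : 0 < b) :
    Gamma a * Gamma b = Gamma (a + b) * ∫ x in (0 : ℝ)..1, x ^ (a - 1) * (1 - x) ^ (b - 1) := by
  have h := Complex.Gamma_mul_Gamma_eq_betaIntegral (s := a) (t := b) (by simpa) (by simpa)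
  rw [Complex.betaIntegral_ofReal, ← Complex.ofReal_add, Complex.Gamma_ofReal,
    Complex.Gamma_ofReal, Complex.Gamma_ofReal] at h
  exact_mod_cast h

/-- For every `p ≥ 1`, `π_p = 2 Γ(1/p)² / (p Γ(2/p))`, where
`π_p = 2 ∫_0^1 (1-t^p)^(-(p-1)/p) dt` and `Γ` is the real Gamma function. -/
theorem pi_p_gamma (p : ℝ) (hp : 1 ≤ p) :
    2 * (∫ t in (0 : ℝ)..1, (1 - t ^ p) ^ (-(p - 1) / p))
      = 2 * (Real.Gamma (1 / p)) ^ 2 / (p * Real.Gamma (2 / p)) := by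
  have hp0 : 0 < p := by linarith
  have hexp : -(p - 1) / p = 1 / p - 1 := by field_simp; ring
  have hbeta := integral_rpow_mul_one_sub_rpow_comp_rpow hp0 (1 / p) (1 / p)
  rw [mul_one_div_cancel hp0.ne', sub_self] at hbeta
  simp only [rpow_zero, one_mul] at hbeta
  have hgamma := Gamma_mul_Gamma_eq_integral (one_div_pos.mpr hp0) (one_div_pos.mpr hp0)
  rw [← hbeta, show 1 / p + 1 / p = 2 / p by ring] at hgamma
  have hΓ : 0 < Gamma (2 / p) := Gamma_pos_of_pos (by positivity)
  rw [hexp, eq_div_iff (by positivity)]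
  linear_combination -2 * hgamma
end

section
/- For every real number p ≥ 1, ∫_0^1 (1 - t^p)^(-(p-1)/p) dt = (1/p) ∫_0^1 u^(1/p - 1) (1 - u)^(1/p - 1) du. (That is, π_p = 2·β(1/p, 1/p), where β is the Beta function.) -/
/-!
Substitute `u = t ^ p`: the Jacobian `p t^(p-1)` cancels the factor `u^(1/p-1) = t^(1-p)`,
leaving `p (1 - t^p)^(1/p-1)`.
-/

open Real MeasureTheory Set

theorem integral_comp_rpow_Ioo_of_pos {E : Type*} [NormedAddCommGroup E] [NormedSpace ℝ E]
    (g : ℝ → E) {p a b : ℝ} (hp : 0 < p) (ha : 0 ≤ a) (hab : a ≤ b) :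
    ∫ x in Ioo a b, (p * x ^ (p - 1)) • g (x ^ p) = ∫ y in Ioo (a ^ p) (b ^ p), g y := by
  have hmono : StrictMonoOn (· ^ p) (Icc a b) :=
    (strictMonoOn_rpow_Ici_of_exponent_pos hp).mono fun x hx ↦ ha.trans hx.1
  rw [← (continuous_rpow_const hp.le).continuousOn.image_Ioo_of_strictMonoOn hab hmono,
    integral_image_eq_integral_abs_deriv_smul measurableSet_Ioo
      (fun x hx ↦ (hasDerivAt_rpow_const (Or.inl (ha.trans_lt hx.1).ne')).hasDerivWithinAt)
      (hmono.injOn.mono Ioo_subset_Icc_self)]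
  refine setIntegral_congr_fun measurableSet_Ioo fun x hx ↦ ?_
  have : 0 ≤ x := ha.trans hx.1.le
  rw [abs_of_nonneg (by positivity)]

theorem rpow_sub_one_mul_rpow_rpow_inv_sub_one {p x : ℝ} (hp : p ≠ 0) (hx : 0 < x) :
    x ^ (p - 1) * (x ^ p) ^ (p⁻¹ - 1) = 1 := by
  rw [← rpow_mul hx.le, ← rpow_add hx, mul_sub, mul_inv_cancel₀ hp]
  simp

/-- For every `p ≥ 1`,
`∫_0^1 (1-t^p)^(-(p-1)/p) dt = (1/p) ∫_0^1 u^(1/p-1) (1-u)^(1/p-1) du`,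
i.e. `π_p = 2 β(1/p, 1/p)`. -/
theorem pi_p_beta (p : ℝ) (hp : 1 ≤ p) :
    (∫ t in (0 : ℝ)..1, (1 - t ^ p) ^ (-(p - 1) / p))
      = (1 / p) * ∫ u in (0 : ℝ)..1, u ^ (1 / p - 1) * (1 - u) ^ (1 / p - 1) := by
  have hp0 : 0 < p := zero_lt_one.trans_le hp
  have hexp : -(p - 1) / p = p⁻¹ - 1 := by field_simp; ring
  have substitution := integral_comp_rpow_Ioo_of_pos
    (fun u ↦ u ^ (p⁻¹ - 1) * (1 - u) ^ (p⁻¹ - 1)) hp0 le_rfl zero_le_one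
  rw [zero_rpow hp0.ne', one_rpow] at substitution
  simp only [hexp, one_div, intervalIntegral.integral_of_le (zero_le_one' ℝ),
    integral_Ioc_eq_integral_Ioo, ← substitution, ← integral_const_mul]
  refine setIntegral_congr_fun measurableSet_Ioo fun t ht ↦ ?_
  rw [smul_eq_mul, mul_assoc, ← mul_assoc (t ^ (p - 1)),
    rpow_sub_one_mul_rpow_rpow_inv_sub_one hp0.ne' ht.1]
  field_simp
end

section
/- Fix a real number x with 0 < x < 1. Then the function ψ(p) := (1 - x^p)^(1/p) is strictly increasing on the interval (0, ∞). -/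
open Real Set

/-- For fixed `x ∈ (0,1)`, the height `ψ(p) = (1-x^p)^(1/p)` of the unit p-circle
above `x` is strictly increasing in `p` on `(0, ∞)`. -/
theorem psi_strictMonoOn (x : ℝ) (hx0 : 0 < x) (hx1 : x < 1) :
    StrictMonoOn (fun p : ℝ => (1 - x ^ p) ^ (1 / p)) (Set.Ioi (0 : ℝ)) := by
  intro p hp q hq hpq
  simp only [Set.mem_Ioi] at hp hq
  have hu0 : 0 < x ^ p := Real.rpow_pos_of_pos hx0 p
  have hu1 : x ^ p < 1 := Real.rpow_lt_one hx0.le hx1 hp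
  have hv0 : (0:ℝ) < 1 - x ^ p := by linarith
  have hv1 : 1 - x ^ p < 1 := by linarith
  have hr : 1 < q / p := (one_lt_div hp).2 hpq
  have hvr : (1 - x ^ p) ^ (q / p) < 1 - x ^ p := by
    calc (1 - x ^ p) ^ (q / p) < (1 - x ^ p) ^ (1:ℝ) :=
          Real.rpow_lt_rpow_of_exponent_gt hv0 hv1 hr
      _ = 1 - x ^ p := Real.rpow_one _
  have hur : x ^ q < x ^ p := Real.rpow_lt_rpow_of_exponent_gt hx0 hx1 hpq
  have key : (1 - x ^ p) ^ (q / p) < 1 - x ^ q := by linarith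
  have h1 : (1 - x ^ p) ^ (1 / p) = ((1 - x ^ p) ^ (q / p)) ^ (1 / q) := by
    rw [← Real.rpow_mul hv0.le]
    congr 1
    field_simp
  show (1 - x ^ p) ^ (1 / p) < (1 - x ^ q) ^ (1 / q)
  rw [h1]
  exact Real.rpow_lt_rpow (Real.rpow_nonneg hv0.le _) key (one_div_pos.2 hq)
end

section
/- The function p ↦ 4 ∫_0^1 (1 - x^p)^(1/p) dx, which gives the area π_p enclosed by the unit p-circle, is strictly increasing on the interval (0, ∞). -/
open Real Set intervalIntegral

lemma cont_aux {p : ℝ} (hp : 0 < p) :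
    ContinuousOn (fun x : ℝ => (1 - x ^ p) ^ (1 / p)) (Icc 0 1) := by
  apply ContinuousOn.rpow_const
  · exact continuousOn_const.sub (continuousOn_id.rpow_const
      (fun x _ => Or.inr hp.le))
  · intro x _
    right; positivity

lemma le_aux {p q : ℝ} (hp : 0 < p) (hpq : p < q) {x : ℝ} (hx0 : 0 ≤ x) (hx1 : x ≤ 1) :
    (1 - x ^ p) ^ (1 / p) ≤ (1 - x ^ q) ^ (1 / q) := by
  have hq : 0 < q := hp.trans hpq
  have h1 : x ^ q ≤ x ^ p := by
    rcases eq_or_lt_of_le hx0 with h | h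
    · simp [← h, Real.zero_rpow hp.ne', Real.zero_rpow hq.ne']
    · exact Real.rpow_le_rpow_of_exponent_ge h hx1 hpq.le
  have hxp1 : x ^ p ≤ 1 := Real.rpow_le_one hx0 hx1 hp.le
  have hb0 : 0 ≤ 1 - x ^ q := by
    have : x ^ q ≤ 1 := Real.rpow_le_one hx0 hx1 hq.le
    linarith
  have step1 : (1 - x ^ p) ^ (1 / p) ≤ (1 - x ^ q) ^ (1 / p) :=
    Real.rpow_le_rpow (by linarith) (by linarith) (by positivity)
  have step2 : (1 - x ^ q) ^ (1 / p) ≤ (1 - x ^ q) ^ (1 / q) := by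
    rcases eq_or_lt_of_le hb0 with h | h
    · rw [← h, Real.zero_rpow (by positivity : (1/p : ℝ) ≠ 0),
        Real.zero_rpow (by positivity : (1/q : ℝ) ≠ 0)]
    · exact Real.rpow_le_rpow_of_exponent_ge h (by
        have : 0 ≤ x ^ q := Real.rpow_nonneg hx0 q
        linarith) (by
        apply one_div_le_one_div_of_le hp hpq.le)
  exact step1.trans step2

/-- The area `π_p = 4 ∫_0^1 (1-x^p)^(1/p) dx` enclosed by the unit p-circle is a
strictly increasing function of `p` on `(0, ∞)`. -/
theorem pi_p_strictMonoOn :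
    StrictMonoOn (fun p : ℝ => 4 * ∫ x in (0 : ℝ)..1, (1 - x ^ p) ^ (1 / p))
      (Set.Ioi (0 : ℝ)) := by
  intro p hp q hq hpq
  simp only [Set.mem_Ioi] at hp hq
  have key : (∫ x in (0:ℝ)..1, (1 - x ^ p) ^ (1 / p))
      < ∫ x in (0:ℝ)..1, (1 - x ^ q) ^ (1 / q) := by
    apply integral_lt_integral_of_continuousOn_of_le_of_exists_lt one_pos
      (cont_aux hp) (cont_aux hq)
    · exact fun x hx => le_aux hp hpq hx.1.le hx.2
    · refine ⟨1/2, ⟨by norm_num, by norm_num⟩, ?_⟩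
      have hx0 : (0:ℝ) < 1/2 := by norm_num
      have hx1 : (1/2:ℝ) < 1 := by norm_num
      have hxq0 : (0:ℝ) < (1/2:ℝ) ^ q := Real.rpow_pos_of_pos hx0 q
      have hxq1 : ((1/2:ℝ)) ^ q < 1 := Real.rpow_lt_one hx0.le hx1 hq
      have hxp1 : ((1/2:ℝ)) ^ p < 1 := Real.rpow_lt_one hx0.le hx1 hp
      have h1 : ((1/2:ℝ)) ^ q < (1/2:ℝ) ^ p :=
        Real.rpow_lt_rpow_of_exponent_gt hx0 hx1 hpq
      have step1 : (1 - (1/2:ℝ) ^ p) ^ (1 / p) < (1 - (1/2:ℝ) ^ q) ^ (1 / p) :=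
        Real.rpow_lt_rpow (by linarith) (by linarith) (by positivity)
      have step2 : (1 - (1/2:ℝ) ^ q) ^ (1 / p) < (1 - (1/2:ℝ) ^ q) ^ (1 / q) := by
        apply Real.rpow_lt_rpow_of_exponent_gt (by linarith) (by linarith)
        exact one_div_lt_one_div_of_lt hp hpq
      exact step1.trans step2
  linarith
end

section
/- The generalized π value tends to 4 as p tends to infinity: the function p ↦ 2·Γ(1/p)² / (p·Γ(2/p)) tends to 4 as p → ∞, where Γ is the real Gamma function. -/
/-!
By `Γ(s + 1) = s Γ(s)`, `π_p = 2 Γ(1/p)² / (p Γ(2/p))` equals `4 Γ(1 + 1/p)² / Γ(1 + 2/p)`,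
and both Gamma values tend to `Γ(1) = 1` as `p → ∞` by continuity of `Γ` at `1`.
-/

open Real Filter Topology

lemma Real.continuousAt_Gamma_one : ContinuousAt Gamma 1 :=
  differentiableOn_Gamma_Ioi.continuousOn.continuousAt (Ioi_mem_nhds one_pos)

lemma Real.tendsto_Gamma_one_add_div_atTop (c : ℝ) :
    Tendsto (fun p : ℝ => Gamma (1 + c / p)) atTop (𝓝 1) := by
  have h : Tendsto (fun p : ℝ => 1 + c / p) atTop (𝓝 (1 + 0)) :=
    tendsto_const_nhds.add (tendsto_const_nhds.div_atTop tendsto_id)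
  rw [add_zero] at h
  simpa only [Gamma_one, Function.comp_def] using continuousAt_Gamma_one.tendsto.comp h

lemma Real.two_mul_Gamma_one_div_sq_div_eq {p : ℝ} (hp : p ≠ 0) :
    2 * Gamma (1 / p) ^ 2 / (p * Gamma (2 / p)) =
      4 * Gamma (1 + 1 / p) ^ 2 / Gamma (1 + 2 / p) := by
  rw [add_comm, Gamma_add_one (by positivity), add_comm, Gamma_add_one (by positivity)]
  field_simp
  ring

/-- `π_p → 4` as `p → ∞`, using the formula `π_p = 2 Γ(1/p)² / (p Γ(2/p))`. -/
theorem pi_p_tendsto_four :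
    Tendsto (fun p : ℝ => 2 * (Real.Gamma (1 / p)) ^ 2 / (p * Real.Gamma (2 / p)))
      atTop (𝓝 4) := by
  have hlim :
      Tendsto (fun p : ℝ => 4 * Gamma (1 + 1 / p) ^ 2 / Gamma (1 + 2 / p)) atTop (𝓝 4) := by
    simpa [Pi.div_def] using (((tendsto_Gamma_one_add_div_atTop 1).pow 2).const_mul 4).div
      (tendsto_Gamma_one_add_div_atTop 2) one_ne_zero
  refine hlim.congr' ?_
  filter_upwards [eventually_ne_atTop 0] with p hp
  exact (two_mul_Gamma_one_div_sq_div_eq hp).symm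
end
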